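/- arXiv:1907.03753 — 2 statements merged into one kernel-verified Lean document; each statement's English description precedes it below -/
import Mathlib

section
/- The strict part $\lnsim$ of a plausible preorder satisfies: if $A$ is an event with $\neg(0\lnsim A)$ and $0\lnsim X$, then $0\lnsim X+A$ and $0\lnsim X-A$. -/
/-- A plausible preorder on a unital associative commutative real algebra. -/
structure PlausiblePreorder (T : Type*) [CommRing T] [Algebra ℝ T] where
  le : T → T → Prop
  plausible : ∀ A : T, A * A = A → le 0 A
  additive : ∀ X Y : T, le 0 X → le 0 Y → le 0 (X + Y)
  smul_nonneg : ∀ (q : ℝ) (X : T), 0 ≤ q → le 0 X → le 0 (q • X)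
  extension : ∀ X Y : T, le X Y ↔ le 0 (Y - X)

variable {T : Type*} [CommRing T] [Algebra ℝ T]

/-- The strict part of a plausible preorder. -/
def PlausiblePreorder.lt (P : PlausiblePreorder T) (X Y : T) : Prop :=
  P.le X Y ∧ ¬ P.le Y X

/-- The equivalence part of a plausible preorder. -/
def PlausiblePreorder.equiv (P : PlausiblePreorder T) (X Y : T) : Prop :=
  P.le X Y ∧ P.le Y X

/-! Events are always plausible, so an event `A` with `¬ 0 ⋨ A` is equivalent to `0`, and then so
is `-A`. Adding some `Y ≈ 0` keeps `0 ⋨ X`: from `X + Y ≲ 0` and `0 ≲ Y`, additivity gives `X ≲ 0`. -/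

namespace PlausiblePreorder

variable (P : PlausiblePreorder T)

theorem le_zero_iff_nonneg_neg {X : T} : P.le X 0 ↔ P.le 0 (-X) := by
  rw [P.extension, zero_sub]

theorem equiv_zero_of_isIdempotentElem {A : T} (hA : IsIdempotentElem A) (hnA : ¬ P.lt 0 A) :
    P.equiv 0 A := by
  have h0A : P.le 0 A := P.plausible A hA
  refine ⟨h0A, ?_⟩
  by_contra hA0
  exact hnA ⟨h0A, hA0⟩

theorem equiv_zero_neg {Y : T} (hY : P.equiv 0 Y) : P.equiv 0 (-Y) := by
  obtain ⟨h0Y, hY0⟩ := hY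
  refine ⟨P.le_zero_iff_nonneg_neg.mp hY0, ?_⟩
  rwa [le_zero_iff_nonneg_neg, neg_neg]

theorem lt_add_of_equiv_zero {X Y : T} (hX : P.lt 0 X) (hY : P.equiv 0 Y) : P.lt 0 (X + Y) := by
  obtain ⟨h0X, hX0⟩ := hX
  refine ⟨P.additive X Y h0X hY.1, fun hXY0 => hX0 ?_⟩
  have h := P.additive _ _ (P.le_zero_iff_nonneg_neg.mp hXY0) hY.1
  rwa [neg_add, neg_add_cancel_right, ← le_zero_iff_nonneg_neg] at h

end PlausiblePreorder

theorem strict_part_plausible_property (P : PlausiblePreorder T)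
    (A X : T) (hA : A * A = A) (hnA : ¬ P.lt 0 A) (hX : P.lt 0 X) :
    P.lt 0 (X + A) ∧ P.lt 0 (X - A) := by
  have hA0 : P.equiv 0 A := P.equiv_zero_of_isIdempotentElem hA hnA
  refine ⟨P.lt_add_of_equiv_zero hX hA0, ?_⟩
  rw [sub_eq_add_neg]
  exact P.lt_add_of_equiv_zero hX (P.equiv_zero_neg hA0)
end

section
/- Chain form of Bayes' rule, zero conditional expectation: if $E(X|C\cdot D) = 0$, then $E(X\cdot C|D) = 0$. -/
variable {T : Type*} [CommRing T] [Algebra ℝ T]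

/-- The conditional expectation of `X` given event `C` is the real number `x`. -/
def CondExpReal (P : PlausiblePreorder T) (X C : T) (x : ℝ) : Prop :=
  ∀ ε : ℝ, 0 < ε →
    P.lt ((-ε) • C) (X * C - x • C) ∧ P.lt (X * C - x • C) (ε • C)

/-- The conditional expectation of `X` given event `C` is `+∞`. -/
def CondExpTop (P : PlausiblePreorder T) (X C : T) : Prop :=
  ∀ y : ℝ, P.lt (y • C) (X * C)

/-- The conditional expectation of `X` given event `C` is `-∞`. -/
def CondExpBot (P : PlausiblePreorder T) (X C : T) : Prop :=
  ∀ y : ℝ, P.lt (X * C) (y • C)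

/-! Since `C * D` lies below `D` in the natural order of events, `ε • (C * D) ≲ ε • D`; so the
bounds `±ε • (C * D)` on `X * C * D = X * (C * D)` widen to the bounds `±ε • D`. -/

namespace PlausiblePreorder

variable (P : PlausiblePreorder T) {X Y Z : T}

theorem le_trans (hXY : P.le X Y) (hYZ : P.le Y Z) : P.le X Z := by
  rw [P.extension] at hXY hYZ ⊢
  simpa only [sub_add_sub_cancel] using P.additive _ _ hYZ hXY

theorem lt_of_lt_of_le (hXY : P.lt X Y) (hYZ : P.le Y Z) : P.lt X Z :=
  ⟨P.le_trans hXY.1 hYZ, fun hZX => hXY.2 (P.le_trans hYZ hZX)⟩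

theorem lt_of_le_of_lt (hXY : P.le X Y) (hYZ : P.lt Y Z) : P.lt X Z :=
  ⟨P.le_trans hXY hYZ.1, fun hZX => hYZ.2 (P.le_trans hZX hXY)⟩

theorem neg_le_neg (h : P.le X Y) : P.le (-Y) (-X) := by
  rwa [P.extension, neg_sub_neg, ← P.extension]

theorem smul_le_smul {q : ℝ} (hq : 0 ≤ q) (h : P.le X Y) : P.le (q • X) (q • Y) := by
  rw [P.extension, ← smul_sub]
  exact P.smul_nonneg q _ hq ((P.extension X Y).1 h)

theorem le_of_mul_eq_left {A B : T} (hA : A * A = A) (hB : B * B = B) (hAB : A * B = A) :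
    P.le A B :=
  (P.extension A B).2 (P.plausible _ (by linear_combination hB - 2 * hAB + hA))

end PlausiblePreorder

theorem condExpReal_zero_iff (P : PlausiblePreorder T) (X C : T) :
    CondExpReal P X C 0 ↔
      ∀ ε : ℝ, 0 < ε → P.lt (-(ε • C)) (X * C) ∧ P.lt (X * C) (ε • C) := by
  simp only [CondExpReal, zero_smul, sub_zero, neg_smul]

theorem condExpReal_zero_of_event_le (P : PlausiblePreorder T) {X Y A B : T}
    (hA : A * A = A) (hB : B * B = B) (hAB : A * B = A) (hXY : X * A = Y * B)
    (h : CondExpReal P X A 0) : CondExpReal P Y B 0 := by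
  rw [condExpReal_zero_iff] at h ⊢
  intro ε hε
  have hεAB : P.le (ε • A) (ε • B) := P.smul_le_smul hε.le (P.le_of_mul_eq_left hA hB hAB)
  obtain ⟨hlower, hupper⟩ := h ε hε
  rw [← hXY]
  exact ⟨P.lt_of_le_of_lt (P.neg_le_neg hεAB) hlower, P.lt_of_lt_of_le hupper hεAB⟩

theorem bayes_chain_form_zero (P : PlausiblePreorder T) (X C D : T)
    (hC : C * C = C) (hD : D * D = D)
    (hx : CondExpReal P X (C * D) 0) :
    CondExpReal P (X * C) D 0 :=
  condExpReal_zero_of_event_le P (by linear_combination D * D * hC + C * hD) hD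
    (by rw [mul_assoc, hD]) (mul_assoc X C D).symm hx
end
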